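/- Let p > 0, ρ > 0, and let x† = f_p(T*T)w with ‖w‖ ≤ ρ. Then there exist C > 0 and δ̄ > 0 such that for every δ ∈ (0,δ̄], every y^δ ∈ Y with ‖y^δ − T x†‖ ≤ δ, and every α ∈ (0,1) satisfying Θ_p(α) = δ, where Θ_p(λ) = √λ·(ln(1/λ))^{−p}, the regularized solution x(δ) = g_α(T*T)T*y^δ satisfies ‖x† − x(δ)‖ ≤ C·(−ln δ)^{−p}. That is, the new method with the a-priori choice α(δ) = Θ_p^{−1}(δ) is order optimal under logarithmic source conditions. -/

import Mathlib

open ContinuousLinearMap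

/-- The generator function `g_α(λ) = 1/(λ + (1 − λ^{√α})²)` with `g_α(0) = 1`,
where `λ^{√α} = exp(√α · log λ)`. -/
noncomputable def genFun (α : ℝ) : ℝ → ℝ := fun t =>
  if t = 0 then 1 else 1 / (t + (1 - Real.exp (Real.sqrt α * Real.log t)) ^ 2)

/-- `f_p(λ) = (−log λ)^{−p}` (with `f_p(0) = 0`). -/
noncomputable def fpFun (p : ℝ) : ℝ → ℝ := fun t => (-Real.log t) ^ (-p)

/-- `Θ_p(λ) = √λ·(log(1/λ))^{−p}`. -/
noncomputable def ThetaP (p lam : ℝ) : ℝ := Real.sqrt lam * Real.log (1 / lam) ^ (-p)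

/-!
With `A = T*T` and `r_α(t) = (1 - t g_α(t)) f_p(t)`, the error splits as
`x† - x(δ) = r_α(A) w - g_α(A) T* (y^δ - T x†)`. On the spectrum `[0, e⁻¹]` the bias factor
satisfies `|r_α| ≤ K (-log α)^(-p)`: below `√α` because `f_p(t) ≤ f_p(√α) = 2^p (-log α)^(-p)`,
above `√α` because `1 - t g_α(t) ≤ α log² t / t ≤ √α log² α` and `√α` beats every power of
`-log α`. The noise factor satisfies `‖g_α(A) T*‖² = sup t g_α(t)² ≤ 4 / α`. The choice
`Θ_p(α) = δ` is exactly `δ / √α = (-log α)^(-p)`, so both terms are `O((-log α)^(-p))`, and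
`-log δ ≤ (1/2 + p)(-log α)` turns this into `O((-log δ)^(-p))`.
-/

open Real Set Filter
open scoped Nat

section genFun

variable {α t : ℝ}

lemma genFun_of_nonneg (hα : 0 < α) (ht : 0 ≤ t) :
    genFun α t = (t + (1 - t ^ √α) ^ 2)⁻¹ := by
  rcases ht.eq_or_lt with rfl | ht
  · simp [genFun, zero_rpow (sqrt_pos.2 hα).ne']
  · simp [genFun, ht.ne', rpow_def_of_pos ht, mul_comm]

lemma le_genFun_denom : t ≤ t + (1 - t ^ √α) ^ 2 :=
  le_add_of_nonneg_right (sq_nonneg _)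

lemma genFun_denom_pos (hα : 0 < α) (ht : 0 ≤ t) : 0 < t + (1 - t ^ √α) ^ 2 := by
  rcases ht.eq_or_lt with rfl | ht
  · simp [zero_rpow (sqrt_pos.2 hα).ne']
  · exact ht.trans_le le_genFun_denom

lemma continuousOn_genFun (hα : 0 < α) : ContinuousOn (genFun α) (Ici 0) := by
  refine ContinuousOn.congr ?_ fun t ht => genFun_of_nonneg hα ht
  have : Continuous fun t : ℝ => t + (1 - t ^ √α) ^ 2 := by
    have := continuous_rpow_const (sqrt_nonneg α); fun_prop
  exact this.continuousOn.inv₀ fun t ht => (genFun_denom_pos hα ht).ne'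

lemma genFun_nonneg (hα : 0 < α) (ht : 0 ≤ t) : 0 ≤ genFun α t := by
  rw [genFun_of_nonneg hα ht]
  exact inv_nonneg.2 (genFun_denom_pos hα ht).le

lemma mul_genFun_le_one (hα : 0 < α) (ht : 0 ≤ t) : t * genFun α t ≤ 1 := by
  rw [genFun_of_nonneg hα ht, ← div_eq_mul_inv]
  exact div_le_one_of_le₀ le_genFun_denom (genFun_denom_pos hα ht).le

lemma one_sub_mul_genFun (hα : 0 < α) (ht : 0 ≤ t) :
    1 - t * genFun α t = (1 - t ^ √α) ^ 2 / (t + (1 - t ^ √α) ^ 2) := by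
  rw [genFun_of_nonneg hα ht]
  field_simp [(genFun_denom_pos hα ht).ne']
  ring

lemma genFun_le_inv (hα : 0 < α) (ht : 0 < t) : genFun α t ≤ t⁻¹ := by
  rw [genFun_of_nonneg hα ht.le]
  exact inv_anti₀ ht le_genFun_denom

lemma one_sub_mul_genFun_nonneg (hα : 0 < α) (ht : 0 ≤ t) : 0 ≤ 1 - t * genFun α t :=
  sub_nonneg.2 (mul_genFun_le_one hα ht)

lemma one_le_neg_log (hα : 0 < α) (hαe : α ≤ exp (-1)) : 1 ≤ -log α := by
  linarith [(log_le_iff_le_exp hα).2 hαe]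

lemma sqrt_div_two_le_one_sub_rpow_sqrt (hα : 0 < α) (hαe : α ≤ exp (-1)) :
    √α / 2 ≤ 1 - α ^ √α := by
  have hL := one_le_neg_log hα hαe
  have hs0 : 0 ≤ √α := sqrt_nonneg α
  have hs1 : √α ≤ 1 := sqrt_le_one.2 (hαe.trans (exp_le_one_iff.2 (by norm_num)))
  set x := √α * -log α
  have hsx : √α ≤ x := le_mul_of_one_le_right hs0 hL
  have hpow : α ^ √α = exp (-x) := by rw [rpow_def_of_pos hα, mul_comm]; simp [x]
  -- `exp (-x) ≤ 1 / (1 + x)`, and `x / (1 + x) ≥ √α / 2` since `√α ≤ x` and `√α ≤ 1`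
  have hexp : exp (-x) * (1 + x) ≤ 1 :=
    calc exp (-x) * (1 + x) ≤ exp (-x) * exp x := by gcongr; linarith [add_one_le_exp x]
      _ = 1 := by rw [← exp_add]; simp
  rw [hpow]
  nlinarith [exp_pos (-x)]

lemma genFun_le_four_div (hα : 0 < α) (hαe : α ≤ exp (-1)) (ht : 0 ≤ t) :
    genFun α t ≤ 4 / α := by
  rcases le_or_gt α t with hαt | htα
  · calc genFun α t ≤ t⁻¹ := genFun_le_inv hα (hα.trans_le hαt)
      _ ≤ α⁻¹ := inv_anti₀ hα hαt
      _ ≤ 4 / α := by rw [inv_eq_one_div]; gcongr; norm_num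
  · have hmono : t ^ √α ≤ α ^ √α := rpow_le_rpow ht htα.le (sqrt_nonneg α)
    have hgap : √α / 2 ≤ 1 - t ^ √α := by
      linarith [sqrt_div_two_le_one_sub_rpow_sqrt hα hαe]
    have hden : α / 4 ≤ t + (1 - t ^ √α) ^ 2 := by
      have := pow_le_pow_left₀ (by positivity) hgap 2
      rw [div_pow, sq_sqrt hα.le] at this
      linarith
    rw [genFun_of_nonneg hα ht]
    calc (t + (1 - t ^ √α) ^ 2)⁻¹ ≤ (α / 4)⁻¹ := inv_anti₀ (by positivity) hden
      _ = 4 / α := by rw [inv_div]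

lemma mul_genFun_sq_le_four_div (hα : 0 < α) (hαe : α ≤ exp (-1)) (ht : 0 ≤ t) :
    t * genFun α t ^ 2 ≤ 4 / α :=
  calc t * genFun α t ^ 2 = t * genFun α t * genFun α t := by ring
    _ ≤ genFun α t := mul_le_of_le_one_left (genFun_nonneg hα ht) (mul_genFun_le_one hα ht)
    _ ≤ 4 / α := genFun_le_four_div hα hαe ht

lemma one_sub_mul_genFun_le (hα : 0 < α) (ht : 0 < t) (ht1 : t ≤ 1) :
    1 - t * genFun α t ≤ α * log t ^ 2 / t := by
  have hu : 0 < t ^ √α := rpow_pos_of_pos ht _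
  have hu1 : t ^ √α ≤ 1 := rpow_le_one ht.le ht1 (sqrt_nonneg α)
  have hlog : 1 - t ^ √α ≤ √α * -log t := by
    have := log_le_sub_one_of_pos hu
    rw [log_rpow ht] at this
    linarith
  have hsq : (1 - t ^ √α) ^ 2 ≤ α * log t ^ 2 := by
    calc (1 - t ^ √α) ^ 2 ≤ (√α * -log t) ^ 2 := pow_le_pow_left₀ (by linarith) hlog 2
      _ = α * log t ^ 2 := by rw [mul_pow, sq_sqrt hα.le, neg_sq]
  rw [one_sub_mul_genFun hα ht.le]
  calc (1 - t ^ √α) ^ 2 / (t + (1 - t ^ √α) ^ 2) ≤ (1 - t ^ √α) ^ 2 / t :=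
        div_le_div_of_nonneg_left (sq_nonneg _) ht le_genFun_denom
    _ ≤ α * log t ^ 2 / t := by gcongr

end genFun

lemma pow_mul_exp_neg_le_factorial {x : ℝ} (hx : 0 ≤ x) (n : ℕ) : x ^ n * exp (-x) ≤ n ! := by
  have := pow_div_factorial_le_exp x hx n
  rw [div_le_iff₀ (by positivity)] at this
  calc x ^ n * exp (-x) ≤ exp x * n ! * exp (-x) := by gcongr
    _ = n ! := by rw [mul_comm, ← mul_assoc, ← exp_add]; simp

section logarithmic

variable {p α t : ℝ}

lemma sqrt_mul_neg_log_rpow_le (hα : 0 < α) (hαe : α ≤ exp (-1)) (q : ℝ) :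
    √α * (-log α) ^ q ≤ 2 ^ ⌈q⌉₊ * (⌈q⌉₊ ! : ℝ) := by
  set L := -log α
  set n := ⌈q⌉₊
  have hL : 1 ≤ L := one_le_neg_log hα hαe
  have hsqrt : √α = exp (-(L / 2)) := by
    rw [sqrt_eq_rpow, rpow_def_of_pos hα]; congr 1; simp only [L]; ring
  calc √α * L ^ q ≤ exp (-(L / 2)) * L ^ n := by
        rw [hsqrt, ← rpow_natCast]
        exact mul_le_mul_of_nonneg_left (rpow_le_rpow_of_exponent_le hL (Nat.le_ceil q))
          (exp_pos _).le
    _ = 2 ^ n * ((L / 2) ^ n * exp (-(L / 2))) := by rw [div_pow]; field_simp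
    _ ≤ 2 ^ n * n ! := by gcongr; exact pow_mul_exp_neg_le_factorial (by positivity) n

lemma continuousOn_fpFun (hp : 0 < p) : ContinuousOn (fpFun p) (Ico 0 1) := by
  intro t ⟨ht0, ht1⟩
  rcases ht0.eq_or_lt with rfl | ht0
  · refine (continuousWithinAt_Ioi_iff_Ici.1 ?_).mono Ico_subset_Ici_self
    have hf0 : fpFun p 0 = 0 := by
      simp only [fpFun, log_zero, neg_zero, zero_rpow (neg_ne_zero.2 hp.ne')]
    rw [ContinuousWithinAt, hf0]
    exact (tendsto_rpow_neg_atTop hp).comp (tendsto_neg_atBot_atTop.comp tendsto_log_nhdsGT_zero)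
  · have hlog : -log t ≠ 0 := (neg_pos.2 (log_neg ht0 ht1)).ne'
    exact ((continuousAt_log ht0.ne').neg.rpow_const (Or.inl hlog)).continuousWithinAt

lemma fpFun_nonneg (ht : 0 ≤ t) (ht1 : t ≤ 1) : 0 ≤ fpFun p t :=
  rpow_nonneg (neg_nonneg.2 (log_nonpos ht ht1)) _

lemma fpFun_le_one (hp : 0 ≤ p) (ht : 0 < t) (hte : t ≤ exp (-1)) : fpFun p t ≤ 1 :=
  rpow_le_one_of_one_le_of_nonpos (one_le_neg_log ht hte) (neg_nonpos.2 hp)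

lemma fpFun_le_of_le_sqrt (hp : 0 < p) (hα : 0 < α) (hα1 : α < 1) (ht : 0 ≤ t) (htα : t ≤ √α) :
    fpFun p t ≤ 2 ^ p * (-log α) ^ (-p) := by
  have hL : 0 < -log α := neg_pos.2 (log_neg hα hα1)
  rcases ht.eq_or_lt with rfl | ht
  · simp only [fpFun, log_zero, neg_zero, zero_rpow (neg_ne_zero.2 hp.ne')]
    positivity
  have hlog : -log α / 2 ≤ -log t := by
    have := log_le_log ht htα
    rw [log_sqrt hα.le] at this
    linarith
  calc fpFun p t ≤ (-log α / 2) ^ (-p) := rpow_le_rpow_of_nonpos (by positivity) hlog (by linarith)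
    _ = 2 ^ p * (-log α) ^ (-p) := by
      rw [div_rpow hL.le zero_le_two, rpow_neg zero_le_two, div_inv_eq_mul, mul_comm]

lemma abs_one_sub_mul_genFun_mul_fpFun_le (hp : 0 < p) (hα : 0 < α) (hαe : α ≤ exp (-1))
    (ht : 0 ≤ t) (hte : t ≤ exp (-1)) :
    |(1 - t * genFun α t) * fpFun p t| ≤
      (2 ^ p + 2 ^ ⌈p + 2⌉₊ * (⌈p + 2⌉₊ ! : ℝ)) * (-log α) ^ (-p) := by
  have he1 : exp (-1) < 1 := exp_lt_one_iff.2 (by norm_num)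
  have hL : 1 ≤ -log α := one_le_neg_log hα hαe
  have hLp : 0 ≤ (-log α) ^ (-p) := rpow_nonneg (by linarith) _
  have hr0 := one_sub_mul_genFun_nonneg hα ht
  have hf0 : 0 ≤ fpFun p t := fpFun_nonneg ht (hte.trans he1.le)
  have hpow : 0 ≤ 2 ^ ⌈p + 2⌉₊ * (⌈p + 2⌉₊ ! : ℝ) := by positivity
  rw [abs_of_nonneg (mul_nonneg hr0 hf0)]
  rcases le_or_gt t √α with htα | htα
  · have hr1 : 1 - t * genFun α t ≤ 1 := by
      linarith [mul_nonneg ht (genFun_nonneg (α := α) hα ht)]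
    calc (1 - t * genFun α t) * fpFun p t ≤ fpFun p t := mul_le_of_le_one_left hf0 hr1
      _ ≤ 2 ^ p * (-log α) ^ (-p) := fpFun_le_of_le_sqrt hp hα (hαe.trans_lt he1) ht htα
      _ ≤ _ := by gcongr; linarith
  · have hs : 0 < √α := sqrt_pos.2 hα
    have ht0 : 0 < t := hs.trans htα
    have hlog : log t ^ 2 ≤ (-log α) ^ 2 := by
      have h1 := log_le_log hs htα.le
      rw [log_sqrt hα.le] at h1
      have h2 := log_nonpos ht0.le (hte.trans he1.le)
      nlinarith
    calc (1 - t * genFun α t) * fpFun p t ≤ 1 - t * genFun α t :=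
          mul_le_of_le_one_right hr0 (fpFun_le_one hp.le ht0 hte)
      _ ≤ α * log t ^ 2 / t := one_sub_mul_genFun_le hα ht0 (hte.trans he1.le)
      _ ≤ α * (-log α) ^ 2 / √α := by gcongr
      _ = √α * (-log α) ^ (p + 2) * (-log α) ^ (-p) := by
        rw [mul_assoc, ← rpow_add (by linarith), show p + 2 + -p = 2 by ring, rpow_two]
        nth_rw 1 [← sq_sqrt hα.le]
        field_simp
      _ ≤ 2 ^ ⌈p + 2⌉₊ * ⌈p + 2⌉₊ ! * (-log α) ^ (-p) := by
        exact mul_le_mul_of_nonneg_right (sqrt_mul_neg_log_rpow_le hα hαe _) hLp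
      _ ≤ _ := by gcongr; exact le_add_of_nonneg_left (by positivity)

end logarithmic

section parameterChoice

variable {p α : ℝ}

lemma thetaP_eq (p α : ℝ) : ThetaP p α = √α * (-log α) ^ (-p) := by
  simp [ThetaP, log_inv]

lemma le_exp_neg_one_of_thetaP_le (hp : 0 ≤ p) (hα : 0 < α) (hα1 : α < 1)
    (h : ThetaP p α ≤ exp (-1)) : α ≤ exp (-1) := by
  by_contra! hαe
  have hL0 : 0 < -log α := neg_pos.2 (log_neg hα hα1)
  have hL1 : -log α ≤ 1 := by linarith [(lt_log_iff_exp_lt hα).2 hαe]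
  have hLp : 1 ≤ (-log α) ^ (-p) := one_le_rpow_of_pos_of_le_one_of_nonpos hL0 hL1 (by linarith)
  have hsqrt : α < √α := (lt_sqrt hα.le).2 (by nlinarith)
  rw [thetaP_eq] at h
  nlinarith [sqrt_nonneg α]

lemma neg_log_thetaP (hα : 0 < α) (hα1 : α < 1) :
    -log (ThetaP p α) = -log α / 2 + p * log (-log α) := by
  have hL0 : 0 < -log α := neg_pos.2 (log_neg hα hα1)
  rw [thetaP_eq, log_mul (sqrt_pos.2 hα).ne' (rpow_pos_of_pos hL0 _).ne', log_sqrt hα.le,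
    log_rpow hL0]
  ring

lemma neg_log_rpow_neg_le_thetaP (hp : 0 ≤ p) (hα : 0 < α) (hαe : α ≤ exp (-1)) :
    (-log α) ^ (-p) ≤ (1 / 2 + p) ^ p * (-log (ThetaP p α)) ^ (-p) := by
  have hα1 : α < 1 := hαe.trans_lt (exp_lt_one_iff.2 (by norm_num))
  have hL := one_le_neg_log hα hαe
  have hlogL := log_nonneg hL
  have hlogL' : log (-log α) ≤ -log α := (log_le_sub_one_of_pos (by linarith)).trans (by linarith)
  have hc : 0 < 1 / 2 + p := by linarith
  have hlow : 0 < -log (ThetaP p α) := by rw [neg_log_thetaP hα hα1]; positivity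
  have hup : -log (ThetaP p α) ≤ (1 / 2 + p) * -log α := by
    rw [neg_log_thetaP hα hα1]; nlinarith
  calc (-log α) ^ (-p) = (1 / 2 + p) ^ p * ((1 / 2 + p) * -log α) ^ (-p) := by
        rw [mul_rpow hc.le (by linarith), ← mul_assoc, ← rpow_add hc, add_neg_cancel, rpow_zero,
          one_mul]
    _ ≤ (1 / 2 + p) ^ p * (-log (ThetaP p α)) ^ (-p) := by
        exact mul_le_mul_of_nonneg_left (rpow_le_rpow_of_nonpos hlow hup (by linarith))
          (by positivity)

end parameterChoice

lemma spectrum_subset_Icc_norm {A : Type*} [CStarAlgebra A] [PartialOrder A] [StarOrderedRing A]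
    {a : A} (ha : 0 ≤ a) : spectrum ℝ a ⊆ Icc 0 ‖a‖ := by
  rcases subsingleton_or_nontrivial A with hA | hA
  · simp [spectrum.of_subsingleton]
  · exact fun t ht =>
      ⟨spectrum_nonneg_of_nonneg ha ht, (le_abs_self t).trans (spectrum.norm_le_norm_of_mem ht)⟩

section adjointCompSelf

variable {X Y : Type*} [NormedAddCommGroup X] [InnerProductSpace ℂ X] [CompleteSpace X]
  [NormedAddCommGroup Y] [InnerProductSpace ℂ Y] [CompleteSpace Y] (T : X →L[ℂ] Y)

lemma adjoint_comp_self_nonneg : 0 ≤ adjoint T ∘L T :=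
  (nonneg_iff_isPositive _).2 (isPositive_adjoint_comp_self T)

variable {T}

lemma cfc_sub_cfc_apply_adjoint {f g : ℝ → ℝ}
    (hf : ContinuousOn f (spectrum ℝ (adjoint T ∘L T)))
    (hg : ContinuousOn g (spectrum ℝ (adjoint T ∘L T))) (w : X) (y : Y) :
    cfc f (adjoint T ∘L T) w - cfc g (adjoint T ∘L T) (adjoint T y) =
      cfc (fun t => (1 - t * g t) * f t) (adjoint T ∘L T) w -
        (cfc g (adjoint T ∘L T) ∘L adjoint T) (y - T (cfc f (adjoint T ∘L T) w)) := by
  set A := adjoint T ∘L T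
  have hA : IsSelfAdjoint A := (adjoint_comp_self_nonneg T).isSelfAdjoint
  have hmul : cfc g A * A * cfc f A = cfc (fun t => g t * t * f t) A := by
    rw [cfc_mul _ f A, cfc_mul g _ A, cfc_id' ℝ A]
  have hsplit : cfc (fun t => (1 - t * g t) * f t) A = cfc f A - cfc g A * A * cfc f A := by
    rw [hmul, ← cfc_sub f (fun t => g t * t * f t) A]
    congr 1; ext t; ring
  rw [hsplit, map_sub]
  simp only [sub_apply, mul_apply_eq_comp, comp_apply, sub_sub_sub_cancel_right, A]

lemma norm_cfc_comp_adjoint_le {g : ℝ → ℝ} (hg : ContinuousOn g (spectrum ℝ (adjoint T ∘L T)))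
    {c : ℝ} (hc : 0 ≤ c) (h : ∀ t ∈ spectrum ℝ (adjoint T ∘L T), t * g t ^ 2 ≤ c) :
    ‖cfc g (adjoint T ∘L T) ∘L adjoint T‖ ≤ √c := by
  set A := adjoint T ∘L T
  have hA : 0 ≤ A := adjoint_comp_self_nonneg T
  set B := T ∘L cfc g A
  have hB : adjoint B = cfc g A ∘L adjoint T := by
    rw [adjoint_comp, (cfc_predicate g A).adjoint_eq]
  have hBB : adjoint B ∘L B = cfc (fun t => g t * t * g t) A := by
    rw [cfc_mul _ g A, cfc_mul g _ A, cfc_id' ℝ A, hB]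
    rfl
  rw [← hB, adjoint.norm_map, le_sqrt (norm_nonneg _) hc, sq, ← norm_adjoint_comp_self, hBB]
  refine norm_cfc_le hc fun t ht => ?_
  have ht0 := spectrum_nonneg_of_nonneg hA ht
  rw [show g t * t * g t = t * g t ^ 2 by ring, norm_of_nonneg (mul_nonneg ht0 (sq_nonneg _))]
  exact h t ht

end adjointCompSelf

theorem stmt9_general {X Y : Type*} [NormedAddCommGroup X] [InnerProductSpace ℂ X]
    [CompleteSpace X] [NormedAddCommGroup Y] [InnerProductSpace ℂ Y] [CompleteSpace Y]
    (T : X →L[ℂ] Y)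
    (hTnorm : ‖(adjoint T) ∘L T‖ ≤ Real.exp (-1))
    (p ρ : ℝ) (hp : 0 < p)
    (w : X) (hw : ‖w‖ ≤ ρ) (xdag : X) (hxdag : xdag = cfc (fpFun p) ((adjoint T) ∘L T) w) :
    ∃ C > (0 : ℝ), ∃ δbar > (0 : ℝ), ∀ δ ∈ Set.Ioc (0 : ℝ) δbar, ∀ yδ : Y,
      ‖yδ - T xdag‖ ≤ δ → ∀ α ∈ Set.Ioo (0 : ℝ) 1, ThetaP p α = δ →
        ‖xdag - cfc (genFun α) ((adjoint T) ∘L T) ((adjoint T) yδ)‖ ≤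
          C * (-Real.log δ) ^ (-p) := by
  set K : ℝ := 2 ^ p + 2 ^ ⌈p + 2⌉₊ * (⌈p + 2⌉₊ ! : ℝ)
  have hρ : 0 ≤ ρ := (norm_nonneg w).trans hw
  refine ⟨(K * ρ + 2) * (1 / 2 + p) ^ p, by positivity, exp (-1), exp_pos _, ?_⟩
  rintro δ ⟨-, hδ⟩ yδ hyδ α ⟨hα0, hα1⟩ rfl
  have hαe := le_exp_neg_one_of_thetaP_le hp.le hα0 hα1 hδ
  have hspec : spectrum ℝ (adjoint T ∘L T) ⊆ Icc 0 (exp (-1)) :=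
    (spectrum_subset_Icc_norm (adjoint_comp_self_nonneg T)).trans (Icc_subset_Icc_right hTnorm)
  have hf : ContinuousOn (fpFun p) (spectrum ℝ (adjoint T ∘L T)) := (continuousOn_fpFun hp).mono
    (hspec.trans (Icc_subset_Ico_right (exp_lt_one_iff.2 (by norm_num))))
  have hg : ContinuousOn (genFun α) (spectrum ℝ (adjoint T ∘L T)) :=
    (continuousOn_genFun hα0).mono (hspec.trans Icc_subset_Ici_self)
  have hLp : 0 ≤ (-log α) ^ (-p) := rpow_nonneg (neg_nonneg.2 (log_nonpos hα0.le hα1.le)) _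
  have hbias : ‖cfc (fun t => (1 - t * genFun α t) * fpFun p t) (adjoint T ∘L T)‖ ≤
      K * (-log α) ^ (-p) := norm_cfc_le (by positivity) fun t ht =>
    abs_one_sub_mul_genFun_mul_fpFun_le hp hα0 hαe (hspec ht).1 (hspec ht).2
  have hnoise : ‖cfc (genFun α) (adjoint T ∘L T) ∘L adjoint T‖ ≤ √(4 / α) :=
    norm_cfc_comp_adjoint_le hg (by positivity) fun t ht =>
      mul_genFun_sq_le_four_div hα0 hαe (hspec ht).1
  subst hxdag
  rw [cfc_sub_cfc_apply_adjoint hf hg]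
  calc _ ≤ K * (-log α) ^ (-p) * ρ + √(4 / α) * ThetaP p α :=
        norm_sub_le_of_le ((le_opNorm _ _).trans (by gcongr)) ((le_opNorm _ _).trans (by gcongr))
    _ = (K * ρ + 2) * (-log α) ^ (-p) := by
        rw [thetaP_eq, sqrt_div' _ hα0.le, show (4 : ℝ) = 2 ^ 2 by norm_num, sqrt_sq zero_le_two]
        field_simp
    _ ≤ (K * ρ + 2) * (1 / 2 + p) ^ p * (-log (ThetaP p α)) ^ (-p) := by
        rw [mul_assoc]
        exact mul_le_mul_of_nonneg_left (neg_log_rpow_neg_le_thetaP hp.le hα0 hαe) (by positivity)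

/-- Let `p > 0`, `ρ > 0`, and let `x† = f_p(T*T)w` with `‖w‖ ≤ ρ`. Then there exist
`C > 0` and `δ̄ > 0` such that for every `δ ∈ (0,δ̄]`, every `y^δ` with
`‖y^δ − T x†‖ ≤ δ`, and every `α ∈ (0,1)` satisfying `Θ_p(α) = δ`, the regularized
solution `x(δ) = g_α(T*T)T*y^δ` satisfies `‖x† − x(δ)‖ ≤ C·(−log δ)^{−p}`:
the new method with the a-priori choice `α(δ) = Θ_p⁻¹(δ)` is order optimal under
logarithmic source conditions. -/
theorem stmt9 {X Y : Type*} [NormedAddCommGroup X] [InnerProductSpace ℂ X]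
    [CompleteSpace X] [NormedAddCommGroup Y] [InnerProductSpace ℂ Y] [CompleteSpace Y]
    (T : X →L[ℂ] Y) (hTinj : Function.Injective T)
    (hTnorm : ‖(adjoint T) ∘L T‖ ≤ Real.exp (-1))
    (p ρ : ℝ) (hp : 0 < p) (hρ : 0 < ρ)
    (w : X) (hw : ‖w‖ ≤ ρ) (xdag : X) (hxdag : xdag = cfc (fpFun p) ((adjoint T) ∘L T) w) :
    ∃ C > (0 : ℝ), ∃ δbar > (0 : ℝ), ∀ δ ∈ Set.Ioc (0 : ℝ) δbar, ∀ yδ : Y,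
      ‖yδ - T xdag‖ ≤ δ → ∀ α ∈ Set.Ioo (0 : ℝ) 1, ThetaP p α = δ →
        ‖xdag - cfc (genFun α) ((adjoint T) ∘L T) ((adjoint T) yδ)‖ ≤
          C * (-Real.log δ) ^ (-p) :=
  stmt9_general T hTnorm p ρ hp w hw xdag hxdag
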